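/- Let k be an infinite field, let m and n be positive integers, and for each index i ∈ {1,…,m} let a_i ∈ ℕⁿ be a weight vector. Let the torus (kˣ)ⁿ act on k^m by (t • v)_i = (∏_{j=1}^n t_j^{a_{ij}}) · v_i, and define π : k^m → k^m by π(v)_i = v_i if a_i = 0 and π(v)_i = 0 otherwise. Suppose Z ⊆ k^m is the zero locus of a set of polynomials in k[x_1,…,x_m] and that t • z ∈ Z for all t ∈ (kˣ)ⁿ and z ∈ Z. Then π(z) ∈ Z for every z ∈ Z; in particular, if Z is nonempty, then Z contains a point fixed by the whole torus action. -/

import Mathlib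

/-!
Restrict the torus action to the diagonal one-parameter subgroup `s ↦ (s, …, s)`, which scales
the coordinate `v_i` by `s ^ |a_i|` with `|a_i| = ∑ⱼ a_ij`. For `z ∈ Z` and `f` vanishing on `Z`,
the function `s ↦ f(s ^ |a_i| z_i)` is a polynomial in `s` vanishing on the infinite set `kˣ`,
hence identically zero; its value at `s = 0` is `f(π z)`. Finally `π z` is fixed, since every
coordinate that `π` does not kill has weight zero.
-/

theorem Polynomial.eq_zero_of_forall_ne_zero_eval_eq_zero {R : Type*} [CommRing R] [IsDomain R]
    [Infinite R] (p : Polynomial R) (h : ∀ s ≠ 0, p.eval s = 0) : p = 0 :=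
  p.eq_zero_of_infinite_isRoot <| (Set.finite_singleton 0).infinite_compl.mono fun s hs => h s hs

theorem MvPolynomial.eval_zero_pow_mul_eq_zero {R σ : Type*} [CommRing R] [IsDomain R]
    [Infinite R] (f : MvPolynomial σ R) (z : σ → R) (d : σ → ℕ)
    (h : ∀ s ≠ 0, eval (fun i => s ^ d i * z i) f = 0) :
    eval (fun i => 0 ^ d i * z i) f = 0 := by
  set p : Polynomial R := eval₂ Polynomial.C (fun i => Polynomial.X ^ d i * Polynomial.C (z i)) f
  have hp : ∀ s, p.eval s = eval (fun i => s ^ d i * z i) f := fun s => by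
    rw [polynomial_eval_eval₂, Polynomial.evalRingHom, Polynomial.eval₂RingHom_comp_C]
    simp only [Polynomial.eval_mul, Polynomial.eval_pow, Polynomial.eval_X, Polynomial.eval_C]
    rfl
  rw [← hp, p.eq_zero_of_forall_ne_zero_eval_eq_zero fun s hs => (hp s).trans (h s hs),
    Polynomial.eval_zero]

theorem zero_pow_sum_mul_eq_ite {ι M₀ : Type*} [Fintype ι] [MonoidWithZero M₀] (a : ι → ℕ)
    (x : M₀) : 0 ^ (∑ j, a j) * x = if a = 0 then x else 0 := by
  simp [zero_pow_eq, Finset.sum_eq_zero_iff, funext_iff]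

theorem stable_zero_locus_contains_fixed_point_general
    {k : Type*} [Field k] [Infinite k] (m n : ℕ)
    (a : Fin m → Fin n → ℕ)
    (act : (Fin n → kˣ) → (Fin m → k) → (Fin m → k))
    (hact : ∀ t v i, act t v i = (∏ j, (t j : k) ^ (a i j)) * v i)
    (π : (Fin m → k) → (Fin m → k))
    (hπ : ∀ v i, π v i = if a i = 0 then v i else 0)
    (P : Set (MvPolynomial (Fin m) k))
    (Z : Set (Fin m → k))
    (hZ : Z = {v : Fin m → k | ∀ f ∈ P, MvPolynomial.eval v f = 0})
    (hstab : ∀ t, ∀ z ∈ Z, act t z ∈ Z) :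
    (∀ z ∈ Z, π z ∈ Z) ∧ (Z.Nonempty → ∃ z ∈ Z, ∀ t, act t z = z) := by
  have hdiag : ∀ (s : k) (hs : s ≠ 0) z,
      act (fun _ => Units.mk0 s hs) z = fun i => s ^ (∑ j, a i j) * z i := fun s hs z =>
    funext fun i => by simp [hact, Finset.prod_pow_eq_pow_sum]
  have hπ_limit : ∀ z, π z = fun i => 0 ^ (∑ j, a i j) * z i := fun z =>
    funext fun i => by rw [hπ, zero_pow_sum_mul_eq_ite]
  have hπ_mem : ∀ z ∈ Z, π z ∈ Z := by
    subst hZ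
    intro z hz f hf
    rw [hπ_limit]
    exact f.eval_zero_pow_mul_eq_zero z _ fun s hs => hdiag s hs z ▸ hstab _ z hz f hf
  refine ⟨hπ_mem, fun ⟨z, hz⟩ => ⟨π z, hπ_mem z hz, fun t => funext fun i => ?_⟩⟩
  rw [hact, hπ]
  split_ifs with h <;> simp [h]

/-- If a torus `(kˣ)ⁿ` acts on `k^m` with nonnegative weights `a_i ∈ ℕⁿ`, and `Z` is a
torus-stable zero locus of polynomials, then the "limit map" `π` (projection onto the
coordinates of weight zero) maps `Z` into itself; in particular a nonempty such `Z`
contains a torus-fixed point. -/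
theorem stable_zero_locus_contains_fixed_point
    {k : Type*} [Field k] [Infinite k] (m n : ℕ) (hm : 0 < m) (hn : 0 < n)
    (a : Fin m → Fin n → ℕ)
    (act : (Fin n → kˣ) → (Fin m → k) → (Fin m → k))
    (hact : ∀ t v i, act t v i = (∏ j, (t j : k) ^ (a i j)) * v i)
    (π : (Fin m → k) → (Fin m → k))
    (hπ : ∀ v i, π v i = if a i = 0 then v i else 0)
    (P : Set (MvPolynomial (Fin m) k))
    (Z : Set (Fin m → k))
    (hZ : Z = {v : Fin m → k | ∀ f ∈ P, MvPolynomial.eval v f = 0})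
    (hstab : ∀ t, ∀ z ∈ Z, act t z ∈ Z) :
    (∀ z ∈ Z, π z ∈ Z) ∧ (Z.Nonempty → ∃ z ∈ Z, ∀ t, act t z = z) :=
  stable_zero_locus_contains_fixed_point_general m n a act hact π hπ P Z hZ hstab
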